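/- Let d ∈ ℕ and let 0 < b < B ≤ d. Then there exists a compact set C ⊆ [0,1]^d such that lb-dim C = b, ub-dim C = B, and the covering regularity exponent satisfies p_t(C) = 0 for all t ≥ b. -/

import Mathlib

open Set Filter Topology Metric MeasureTheory

/-- Minimum number of sets of diameter at most `δ` needed to cover `F`. -/
noncomputable def coverN {X : Type*} [MetricSpace X] (F : Set X) (δ : ℝ) : ℕ :=
  sInf {n : ℕ | ∃ U : Fin n → Set X, (∀ i, EMetric.diam (U i) ≤ ENNReal.ofReal δ) ∧ F ⊆ ⋃ i, U i}

/-- Lower box dimension. -/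
noncomputable def lbDim {X : Type*} [MetricSpace X] (F : Set X) : ℝ :=
  Filter.liminf (fun δ : ℝ => Real.log (coverN F δ) / (-Real.log δ)) (𝓝[>] 0)

/-- Upper box dimension. -/
noncomputable def ubDim {X : Type*} [MetricSpace X] (F : Set X) : ℝ :=
  Filter.limsup (fun δ : ℝ => Real.log (coverN F δ) / (-Real.log δ)) (𝓝[>] 0)

/-- The `(t,δ)`-covering regularity exponent `p_{t,δ}(C)`. -/
noncomputable def cre {X : Type*} [MetricSpace X] (C : Set X) (t δ : ℝ) : ℝ :=
  sSup {p : ℝ | 0 ≤ p ∧ p ≤ 1 ∧ δ ^ (-(p * t)) ≤ (coverN C (δ ^ p) : ℝ)}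

/-- The `t`-covering regularity exponent `p_t(C)`. -/
noncomputable def creT {X : Type*} [MetricSpace X] (C : Set X) (t : ℝ) : ℝ :=
  Filter.liminf (fun δ : ℝ => cre C t δ) (𝓝[>] 0)

/-!
The set is a Cantor-type digit set: its points have binary coordinates, and at level `n` only the
first `e n ≤ d` coordinates may carry a nonzero digit. Its `2⁻ⁿ`-covering number lies between
`2 ^ g n` and `2 ^ g (n + d)`, where `g n = e 0 + ⋯ + e (n - 1)`, so the box dimensions and the
covering regularity exponents are read off the growth of `g`.

We let `g` grow greedily, in steps of `0` or `d`, under a cap that alternates between the lines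
`n * B` (fast phases) and `n * b - K` (slow phases), each phase longer than the previous one by an
unbounded factor; then `g n / n` oscillates between `b` and `B`. At the end `W` of a slow phase the
bound `g n ≤ n * b - K` holds for all `n` between `o(W)` and `W`. So for `δ = 2⁻ᵂ` and `t ≥ b`, at
every scale `δ ^ p` with `p` bounded away from `0` the set is covered by fewer than `δ ^ (-p t)`
sets, which forces `p_t = 0`.
-/

section CoverN

variable {X : Type*} [MetricSpace X]

theorem coverN_le_card {ι : Type*} [Fintype ι] {F : Set X} {δ : ℝ} (U : ι → Set X)
    (hU : ∀ i, ediam (U i) ≤ ENNReal.ofReal δ) (hF : F ⊆ ⋃ i, U i) :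
    coverN F δ ≤ Fintype.card ι := by
  let e := Fintype.equivFin ι
  refine Nat.sInf_le ⟨fun k => U (e.symm k), fun k => hU _, hF.trans ?_⟩
  exact iUnion_subset fun i => subset_iUnion_of_subset (e i) (by simp)

theorem exists_cover_of_totallyBounded {F : Set X} (hF : TotallyBounded F) {δ : ℝ}
    (hδ : 0 < δ) :
    ∃ n, ∃ U : Fin n → Set X, (∀ i, ediam (U i) ≤ ENNReal.ofReal δ) ∧ F ⊆ ⋃ i, U i := by
  obtain ⟨t, ht, hFt⟩ := Metric.totallyBounded_iff.1 hF (δ / 2) (half_pos hδ)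
  have := ht.fintype
  let e := Fintype.equivFin t
  refine ⟨_, fun k => ball (e.symm k : X) (δ / 2), fun k => ?_, fun x hx => ?_⟩
  · refine ediam_le fun y hy z hz => ?_
    rw [edist_dist]
    refine ENNReal.ofReal_le_ofReal ((dist_triangle_right y z (e.symm k : X)).trans ?_)
    linarith [mem_ball.1 hy, mem_ball.1 hz]
  · obtain ⟨c, hc, hxc⟩ := mem_iUnion₂.1 (hFt hx)
    exact mem_iUnion.2 ⟨e ⟨c, hc⟩, by simpa using hxc⟩

theorem card_le_coverN {ι : Type*} [Fintype ι] {F : Set X} (hF : TotallyBounded F) {δ : ℝ}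
    (hδ : 0 < δ) (x : ι → X) (hx : ∀ i, x i ∈ F)
    (hsep : Pairwise fun i j => δ < dist (x i) (x j)) :
    Fintype.card ι ≤ coverN F δ := by
  obtain ⟨U, hU, hFU⟩ : ∃ U : Fin (coverN F δ) → Set X,
      (∀ i, ediam (U i) ≤ ENNReal.ofReal δ) ∧ F ⊆ ⋃ i, U i :=
    Nat.sInf_mem (exists_cover_of_totallyBounded hF hδ)
  choose c hc using fun i => mem_iUnion.1 (hFU (hx i))
  have hinj : Function.Injective c := fun i j hij => by
    by_contra hne
    have hle := (edist_le_ediam_of_mem (hc i) (hij ▸ hc j)).trans (hU (c i))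
    exact (hsep hne).not_ge ((edist_le_ofReal hδ.le).1 hle)
  simpa using Fintype.card_le_of_injective c hinj

theorem one_le_coverN {F : Set X} (hF : TotallyBounded F) (hne : F.Nonempty) {δ : ℝ}
    (hδ : 0 < δ) : 1 ≤ coverN F δ := by
  obtain ⟨x, hx⟩ := hne
  simpa using card_le_coverN hF hδ (fun _ : Unit => x) (fun _ => hx) Subsingleton.pairwise

end CoverN

namespace Real

theorem abs_ofDigitsTerm_sub_eq {u v : ℕ → Fin 2} {n : ℕ} (h : u n ≠ v n) :
    |ofDigitsTerm u n - ofDigitsTerm v n| = ((2 : ℝ) ^ (n + 1))⁻¹ := by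
  simp only [ofDigitsTerm, ← sub_mul, abs_mul, Nat.cast_ofNat]
  generalize u n = x, v n = y at h
  fin_cases x <;> fin_cases y <;> simp_all

theorem abs_ofDigitsTerm_sub_le (u v : ℕ → Fin 2) (n : ℕ) :
    |ofDigitsTerm u n - ofDigitsTerm v n| ≤ ((2 : ℝ) ^ (n + 1))⁻¹ := by
  by_cases h : u n = v n
  · simp [ofDigitsTerm, h]
  · exact (abs_ofDigitsTerm_sub_eq h).le

theorem inv_two_pow_le_abs_sum_ofDigitsTerm_sub {u v : ℕ → Fin 2} {N : ℕ}
    (h : ∃ n < N, u n ≠ v n) :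
    ((2 : ℝ) ^ N)⁻¹ ≤ |∑ n ∈ Finset.range N, (ofDigitsTerm u n - ofDigitsTerm v n)| := by
  induction N with
  | zero => simp at h
  | succ N ih =>
    rw [Finset.sum_range_succ]
    by_cases hN : ∃ n < N, u n ≠ v n
    · have hhalf : ((2 : ℝ) ^ (N + 1))⁻¹ = ((2 : ℝ) ^ N)⁻¹ / 2 := by
        rw [pow_succ, mul_inv, div_eq_mul_inv]
      have := abs_ofDigitsTerm_sub_le u v N
      have := abs_sub_abs_le_abs_add (∑ n ∈ Finset.range N, (ofDigitsTerm u n - ofDigitsTerm v n))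
        (ofDigitsTerm u N - ofDigitsTerm v N)
      linarith [ih hN]
    · push Not at hN
      obtain ⟨n, hn, hne⟩ := h
      have hnN : n = N := by
        by_contra h'
        exact hne (hN n (by omega))
      subst hnN
      rw [Finset.sum_eq_zero fun i hi => by simp [ofDigitsTerm, hN i (Finset.mem_range.1 hi)],
        zero_add, abs_ofDigitsTerm_sub_eq hne]

theorem inv_two_pow_le_abs_ofDigits_sub {u v : ℕ → Fin 2} {N : ℕ} (h : ∃ n < N, u n ≠ v n)
    (htail : ∀ n, N ≤ n → u n = v n) :
    ((2 : ℝ) ^ N)⁻¹ ≤ |ofDigits u - ofDigits v| := by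
  have htail' : (fun i => u (i + N)) = fun i => v (i + N) := funext fun i => htail _ (by omega)
  rw [ofDigits_eq_sum_add_ofDigits u N, ofDigits_eq_sum_add_ofDigits v N, htail',
    add_sub_add_right_eq_sub, ← Finset.sum_sub_distrib]
  exact inv_two_pow_le_abs_sum_ofDigitsTerm_sub h

end Real

theorem EuclideanSpace.dist_le_sqrt_card_mul {ι : Type*} [Fintype ι]
    {x y : EuclideanSpace ℝ ι} {r : ℝ} (hr : 0 ≤ r) (h : ∀ i, |x i - y i| ≤ r) :
    dist x y ≤ √(Fintype.card ι) * r := by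
  rw [EuclideanSpace.dist_eq, ← Real.sqrt_sq hr, ← Real.sqrt_mul (Nat.cast_nonneg _)]
  refine Real.sqrt_le_sqrt ?_
  calc ∑ i, dist (x i) (y i) ^ 2 ≤ ∑ _i : ι, r ^ 2 := by
        gcongr with i
        exact (Real.dist_eq _ _).trans_le (h i)
    _ = Fintype.card ι * r ^ 2 := by simp

theorem Real.sqrt_natCast_le_two_pow (d : ℕ) : √(d : ℝ) ≤ 2 ^ d := by
  rw [Real.sqrt_le_iff]
  refine ⟨by positivity, ?_⟩
  exact_mod_cast Nat.lt_two_pow_self.le.trans (Nat.le_self_pow two_ne_zero _)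

section DigitSet

variable (d : ℕ) (e : ℕ → ℕ)

abbrev DigitSeq := ∀ n, Fin (e n) → Fin 2

variable {e} in
def DigitSeq.coord (a : DigitSeq e) (i : ℕ) : ℕ → Fin 2 :=
  fun n => if h : i < e n then a n ⟨i, h⟩ else 0

noncomputable def digitPoint (a : DigitSeq e) : EuclideanSpace ℝ (Fin d) :=
  WithLp.toLp 2 fun i => Real.ofDigits (a.coord i)

def digitSet : Set (EuclideanSpace ℝ (Fin d)) := range (digitPoint d e)

theorem digitSet_subset_cube :
    digitSet d e ⊆ {x : EuclideanSpace ℝ (Fin d) | ∀ i, x i ∈ Icc (0 : ℝ) 1} := by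
  rintro _ ⟨a, rfl⟩ i
  exact ⟨Real.ofDigits_nonneg _, Real.ofDigits_le_one _⟩

theorem isCompact_digitSet : IsCompact (digitSet d e) := by
  refine isCompact_range (PiLp.continuous_toLp 2 _ |>.comp (continuous_pi fun i => ?_))
  refine Real.continuous_ofDigits.comp (continuous_pi fun n => ?_)
  unfold DigitSeq.coord
  split_ifs
  · exact (continuous_apply _).comp (continuous_apply n)
  · exact continuous_const

theorem digitSet_nonempty : (digitSet d e).Nonempty := range_nonempty _

theorem dist_digitPoint_le {a a' : DigitSeq e} {N : ℕ} (h : ∀ n < N, a n = a' n) :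
    dist (digitPoint d e a) (digitPoint d e a') ≤ √(d : ℝ) * ((2 : ℝ) ^ N)⁻¹ := by
  have hcoord (i : Fin d) : |digitPoint d e a i - digitPoint d e a' i| ≤ ((2 : ℝ) ^ N)⁻¹ := by
    simpa [digitPoint] using Real.abs_ofDigits_sub_ofDigits_le (b := 2) (x := a.coord i)
      (y := a'.coord i) fun n hn => by simp [DigitSeq.coord, h n hn]
  simpa using EuclideanSpace.dist_le_sqrt_card_mul (by positivity) hcoord

theorem inv_two_pow_le_dist_digitPoint (he : ∀ n, e n ≤ d) {a a' : DigitSeq e} {N : ℕ}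
    (hne : ∃ n < N, a n ≠ a' n) (htail : ∀ n, N ≤ n → a n = a' n) :
    ((2 : ℝ) ^ N)⁻¹ ≤ dist (digitPoint d e a) (digitPoint d e a') := by
  obtain ⟨n, hn, hne⟩ := hne
  obtain ⟨i, hi⟩ := Function.ne_iff.1 hne
  have hid : (i : ℕ) < d := i.2.trans_le (he n)
  refine (Real.inv_two_pow_le_abs_ofDigits_sub (u := a.coord i) (v := a'.coord i) ⟨n, hn, ?_⟩
    fun m hm => by simp [DigitSeq.coord, htail m hm]).trans ?_
  · simpa [DigitSeq.coord] using hi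
  · simpa [digitPoint, Real.dist_eq] using PiLp.dist_apply_le (digitPoint d e a)
      (digitPoint d e a') ⟨i, hid⟩

theorem card_digitPrefix (N : ℕ) :
    Fintype.card (∀ j : Fin N, Fin (e j) → Fin 2) = 2 ^ ∑ j ∈ Finset.range N, e j := by
  simp [Fintype.card_pi, Fin.prod_univ_eq_prod_range (fun j => 2 ^ e j),
    Finset.prod_pow_eq_pow_sum]

theorem coverN_digitSet_le {n : ℕ} {δ : ℝ} (hδ : ((2 : ℝ) ^ n)⁻¹ ≤ δ) :
    coverN (digitSet d e) δ ≤ 2 ^ ∑ j ∈ Finset.range (n + d), e j := by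
  rw [← card_digitPrefix]
  refine coverN_le_card (fun p => digitPoint d e '' {a | ∀ j : Fin (n + d), a j = p j})
    (fun p => ediam_le ?_) ?_
  · rintro _ ⟨a, ha, rfl⟩ _ ⟨a', ha', rfl⟩
    rw [edist_dist]
    refine ENNReal.ofReal_le_ofReal ((dist_digitPoint_le d e (N := n + d) fun j hj => ?_).trans
      (hδ.trans' ?_))
    · rw [ha ⟨j, hj⟩, ha' ⟨j, hj⟩]
    · calc √(d : ℝ) * ((2 : ℝ) ^ (n + d))⁻¹ ≤ 2 ^ d * ((2 : ℝ) ^ (n + d))⁻¹ := by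
            gcongr; exact Real.sqrt_natCast_le_two_pow d
        _ = ((2 : ℝ) ^ n)⁻¹ := by rw [pow_add]; field_simp
  · rintro _ ⟨a, rfl⟩
    exact mem_iUnion.2 ⟨fun j => a j, a, fun j => rfl, rfl⟩

theorem pow_le_coverN_digitSet (he : ∀ n, e n ≤ d) {N : ℕ} {δ : ℝ} (hδ₀ : 0 < δ)
    (hδ : δ < ((2 : ℝ) ^ N)⁻¹) :
    2 ^ ∑ j ∈ Finset.range N, e j ≤ coverN (digitSet d e) δ := by
  rw [← card_digitPrefix]
  let extend (p : ∀ j : Fin N, Fin (e j) → Fin 2) : DigitSeq e :=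
    fun n => if h : n < N then p ⟨n, h⟩ else 0
  refine card_le_coverN (isCompact_digitSet d e).totallyBounded hδ₀
    (fun p => digitPoint d e (extend p)) (fun p => mem_range_self _) fun p q hpq => ?_
  refine hδ.trans_le (inv_two_pow_le_dist_digitPoint d e he ?_ fun n hn => by
    simp [extend, hn.not_gt])
  obtain ⟨j, hj⟩ := Function.ne_iff.1 hpq
  exact ⟨j, j.2, by simpa [extend] using hj⟩

end DigitSet

section Asymptotics

theorem Filter.liminf_eq_of_forall_pos {α : Type*} {l : Filter α} {f : α → ℝ} {b : ℝ}
    (hge : ∀ ε > 0, ∀ᶠ x in l, b - ε ≤ f x) (hle : ∀ ε > 0, ∃ᶠ x in l, f x ≤ b + ε) :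
    liminf f l = b := by
  have hbdd : IsBoundedUnder (· ≥ ·) l f := ⟨b - 1, hge 1 one_pos⟩
  have hcobdd : IsCoboundedUnder (· ≥ ·) l f := .of_frequently_le (hle 1 one_pos)
  exact le_antisymm
    (le_of_forall_pos_le_add fun ε hε => liminf_le_of_frequently_le (hle ε hε) hbdd)
    (le_of_forall_sub_le fun ε hε => le_liminf_of_le hcobdd (hge ε hε))

theorem Filter.limsup_eq_of_forall_pos {α : Type*} {l : Filter α} {f : α → ℝ} {b : ℝ}
    (hle : ∀ ε > 0, ∀ᶠ x in l, f x ≤ b + ε) (hge : ∀ ε > 0, ∃ᶠ x in l, b - ε ≤ f x) :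
    limsup f l = b := by
  have hbdd : IsBoundedUnder (· ≤ ·) l f := ⟨b + 1, hle 1 one_pos⟩
  have hcobdd : IsCoboundedUnder (· ≤ ·) l f := .of_frequently_ge (hge 1 one_pos)
  exact le_antisymm (le_of_forall_pos_le_add fun ε hε => limsup_le_of_le hcobdd (hle ε hε))
    (le_of_forall_sub_le fun ε hε => le_limsup_of_frequently_le (hge ε hε) hbdd)

theorem exists_mem_Ico_inv_two_pow {δ : ℝ} (h₀ : 0 < δ) (h₁ : δ < 1) :
    ∃ n : ℕ, δ ∈ Ico ((2 : ℝ) ^ (n + 1))⁻¹ ((2 : ℝ) ^ n)⁻¹ := by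
  classical
  have hex : ∃ n : ℕ, ((2 : ℝ) ^ n)⁻¹ ≤ δ :=
    (exists_pow_lt_of_lt_one h₀ one_half_lt_one).imp fun n hn => by simpa using hn.le
  obtain ⟨n, hn⟩ : ∃ n, Nat.find hex = n + 1 :=
    Nat.exists_eq_add_one_of_ne_zero fun h0 => by
      have := Nat.find_spec hex
      rw [h0] at this
      norm_num at this
      linarith
  exact ⟨n, hn ▸ Nat.find_spec hex, lt_of_not_ge (Nat.find_min hex (by omega))⟩

theorem eventually_nhdsGT_zero_of_dyadic {P : ℝ → Prop}
    (h : ∀ᶠ n : ℕ in atTop, ∀ δ ∈ Ico ((2 : ℝ) ^ (n + 1))⁻¹ ((2 : ℝ) ^ n)⁻¹, P δ) :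
    ∀ᶠ δ in 𝓝[>] 0, P δ := by
  obtain ⟨N, hN⟩ := eventually_atTop.1 h
  have hN' : (0 : ℝ) < ((2 : ℝ) ^ N)⁻¹ := by positivity
  filter_upwards [Ioo_mem_nhdsGT hN'] with δ ⟨hδ₀, hδN⟩
  obtain ⟨n, hn⟩ := exists_mem_Ico_inv_two_pow hδ₀
    (hδN.trans_le (inv_le_one_of_one_le₀ (one_le_pow₀ one_le_two)))
  refine hN n ?_ δ hn
  by_contra! hnN
  have : ((2 : ℝ) ^ N)⁻¹ ≤ ((2 : ℝ) ^ (n + 1))⁻¹ := by gcongr; exacts [one_le_two, hnN]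
  linarith [hn.1]

theorem tendsto_inv_two_pow_nhdsGT_zero {u : ℕ → ℕ} (hu : Tendsto u atTop atTop) :
    Tendsto (fun k => ((2 : ℝ) ^ u k)⁻¹) atTop (𝓝[>] 0) :=
  tendsto_inv_atTop_nhdsGT_zero.comp ((tendsto_pow_atTop_atTop_of_one_lt one_lt_two).comp hu)

theorem inv_two_pow_succ_mem_Ico (n : ℕ) :
    ((2 : ℝ) ^ (n + 1))⁻¹ ∈ Ico ((2 : ℝ) ^ (n + 1))⁻¹ ((2 : ℝ) ^ n)⁻¹ :=
  left_mem_Ico.2 (by gcongr <;> norm_num)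

theorem inv_two_pow_rpow (W : ℕ) (x : ℝ) : ((2 : ℝ) ^ W)⁻¹ ^ x = 2 ^ (-(W * x)) := by
  rw [← Real.rpow_natCast, ← Real.rpow_neg zero_le_two, ← Real.rpow_mul zero_le_two, neg_mul]

theorem log_div_neg_log_mem_Icc {n a c : ℕ} (hn : 1 ≤ n) {δ N : ℝ}
    (hδ : δ ∈ Ico ((2 : ℝ) ^ (n + 1))⁻¹ ((2 : ℝ) ^ n)⁻¹) (ha : (2 : ℝ) ^ a ≤ N)
    (hc : N ≤ 2 ^ c) :
    Real.log N / -Real.log δ ∈ Icc ((a : ℝ) / (n + 1)) ((c : ℝ) / n) := by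
  have hδ₀ : 0 < δ := hδ.1.trans_lt' (by positivity)
  have hlog2 := Real.log_pos one_lt_two
  have hδlo : -Real.log δ ≤ (n + 1) * Real.log 2 := by
    have := Real.log_le_log (by positivity) hδ.1
    rw [Real.log_inv, Real.log_pow] at this
    push_cast at this
    linarith
  have hδhi : n * Real.log 2 < -Real.log δ := by
    have := Real.log_lt_log hδ₀ hδ.2
    rw [Real.log_inv, Real.log_pow] at this
    linarith
  have hNlo : a * Real.log 2 ≤ Real.log N := by
    simpa [Real.log_pow] using Real.log_le_log (by positivity) ha
  have hNhi : Real.log N ≤ c * Real.log 2 := by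
    simpa [Real.log_pow] using Real.log_le_log ((pow_pos two_pos a).trans_le ha) hc
  have hn₀ : (0 : ℝ) < n := by exact_mod_cast hn
  have ha₀ : (0 : ℝ) ≤ a := a.cast_nonneg
  have hc₀ : (0 : ℝ) ≤ c := c.cast_nonneg
  constructor
  · rw [div_le_div_iff₀ (by positivity) (by nlinarith)]
    nlinarith
  · rw [div_le_div_iff₀ (by nlinarith) hn₀]
    nlinarith

end Asymptotics

theorem log_coverN_digitSet_div_mem_Icc (d : ℕ) {e : ℕ → ℕ} (he : ∀ n, e n ≤ d) {n : ℕ}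
    (hn : 1 ≤ n) {δ : ℝ} (hδ : δ ∈ Ico ((2 : ℝ) ^ (n + 1))⁻¹ ((2 : ℝ) ^ n)⁻¹) :
    Real.log (coverN (digitSet d e) δ) / -Real.log δ ∈
      Icc ((∑ j ∈ Finset.range n, e j : ℕ) / (n + 1 : ℝ))
        ((∑ j ∈ Finset.range (n + 1 + d), e j : ℕ) / (n : ℝ)) :=
  log_div_neg_log_mem_Icc hn hδ
    (by exact_mod_cast pow_le_coverN_digitSet d e he (hδ.1.trans_lt' (by positivity)) hδ.2)
    (by exact_mod_cast coverN_digitSet_le d e hδ.1)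

section CoveringRegularity

variable {X : Type*} [MetricSpace X]

theorem cre_nonneg {C : Set X} (hC : 1 ≤ coverN C 1) (t δ : ℝ) : 0 ≤ cre C t δ :=
  le_csSup ⟨1, fun _ hp => hp.2.1⟩ ⟨le_rfl, zero_le_one, by simpa using hC⟩

theorem cre_le {C : Set X} {t δ ε : ℝ} (hε : 0 ≤ ε)
    (h : ∀ p, ε < p → p ≤ 1 → (coverN C (δ ^ p) : ℝ) < δ ^ (-(p * t))) : cre C t δ ≤ ε :=
  Real.sSup_le (fun p ⟨_, hp₁, hp⟩ => le_of_not_gt fun hεp => (h p hεp hp₁).not_ge hp) hε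

end CoveringRegularity

section Greedy

variable (d : ℕ) (cap : ℕ → ℝ)

noncomputable def greedy : ℕ → ℕ
  | 0 => 0
  | n + 1 => greedy n + if (greedy n : ℝ) + d ≤ cap (n + 1) then d else 0

@[simp]
theorem greedy_zero : greedy d cap 0 = 0 := rfl

theorem greedy_succ (n : ℕ) :
    greedy d cap (n + 1) =
      greedy d cap n + if (greedy d cap n : ℝ) + d ≤ cap (n + 1) then d else 0 :=
  rfl

theorem greedy_succ_le (n : ℕ) : greedy d cap (n + 1) ≤ greedy d cap n + d := by
  rw [greedy_succ]
  split_ifs <;> omega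

theorem greedy_mono : Monotone (greedy d cap) :=
  monotone_nat_of_le_succ fun n => by rw [greedy_succ]; omega

variable {d cap}

theorem greedy_le_of_cap_le {M : ℝ} {m n : ℕ} (hmn : m ≤ n) (hm : (greedy d cap m : ℝ) ≤ M)
    (hcap : ∀ j, m < j → j ≤ n → cap j ≤ M) : (greedy d cap n : ℝ) ≤ M := by
  induction n, hmn using Nat.le_induction with
  | base => exact hm
  | succ n hmn ih =>
    rw [greedy_succ]
    split_ifs with h
    · push_cast
      exact h.trans (hcap _ (by omega) le_rfl)
    · simpa using ih fun j hj hjn => hcap j hj (by omega)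

theorem le_greedy_of_le_cap {L : ℕ → ℝ} {m n : ℕ} (hmn : m ≤ n) (hL : ∀ j, L (j + 1) ≤ L j + d)
    (hm : L m - d ≤ greedy d cap m) (hcap : ∀ j, m < j → j ≤ n → L j ≤ cap j) :
    L n - d ≤ greedy d cap n := by
  induction n, hmn using Nat.le_induction with
  | base => exact hm
  | succ n hmn ih =>
    have ih := ih fun j hj hjn => hcap j hj (by omega)
    have := hL n
    rw [greedy_succ]
    split_ifs with h
    · push_cast
      linarith
    · have := hcap (n + 1) (by omega) le_rfl
      push_cast
      linarith

end Greedy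

namespace Condensation

variable (d : ℕ) (b B : ℝ)

/-- Exceeds `(d + 1) * b`, the loss caused by the shift `n ↦ n + 1 + d` between the lower and the
upper covering bound of a digit set. -/
noncomputable def margin : ℝ := (d + 2) * b

noncomputable def stretch : ℕ := ⌈(B + margin d b) / b⌉₊ + 1

/-- The cap is `n * B` on the fast phases `(epoch (2k), epoch (2k+1)]` and `n * b - margin` on the
slow phases `(epoch (2k+1), epoch (2k+2)]`. In a slow phase the profile stays flat until the line
`n * b - margin` overtakes it, at the latest at `stretch * epoch (2k+1)`. -/
noncomputable def epoch : ℕ → ℕ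
  | 0 => 1
  | j + 1 => (j + 2) * stretch d b B * epoch j

def InFastPhase (n : ℕ) : Prop :=
  ∃ k, epoch d b B (2 * k) < n ∧ n ≤ epoch d b B (2 * k + 1)

open Classical in
noncomputable def cap (n : ℕ) : ℝ := if InFastPhase d b B n then n * B else n * b - margin d b

noncomputable def profile : ℕ → ℕ := greedy d (cap d b B)

noncomputable def condensation : Set (EuclideanSpace ℝ (Fin d)) :=
  digitSet d fun n => profile d b B (n + 1) - profile d b B n

theorem epoch_succ (j : ℕ) :
    epoch d b B (j + 1) = (j + 2) * stretch d b B * epoch d b B j :=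
  rfl

theorem epoch_pos (j : ℕ) : 0 < epoch d b B j := by
  induction j with
  | zero => exact one_pos
  | succ j ih => rw [epoch_succ]; have : 0 < stretch d b B := Nat.succ_pos _; positivity

theorem mul_epoch_le_epoch_succ (j : ℕ) : (j + 2) * epoch d b B j ≤ epoch d b B (j + 1) := by
  rw [epoch_succ, mul_right_comm]
  exact Nat.le_mul_of_pos_right _ (Nat.succ_pos _)

theorem epoch_strictMono : StrictMono (epoch d b B) :=
  strictMono_nat_of_lt_succ fun j => by
    have := mul_epoch_le_epoch_succ d b B j
    have := epoch_pos d b B j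
    nlinarith

theorem stretch_mul_epoch_pos (j : ℕ) : 0 < stretch d b B * epoch d b B j :=
  Nat.mul_pos (Nat.succ_pos _) (epoch_pos d b B j)

theorem stretch_mul_epoch_le (k : ℕ) :
    stretch d b B * epoch d b B (2 * k + 1) ≤ epoch d b B (2 * k + 2) := by
  rw [epoch_succ (j := 2 * k + 1), mul_assoc]
  exact Nat.le_mul_of_pos_left _ (Nat.succ_pos _)

theorem tendsto_epoch_sub :
    Tendsto (fun k => epoch d b B (2 * k + 2) - d) atTop atTop :=
  (tendsto_sub_atTop_nat d).comp
    ((epoch_strictMono d b B).comp fun k l (h : k < l) => by omega).tendsto_atTop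

theorem not_inFastPhase {k n : ℕ} (h₁ : epoch d b B (2 * k + 1) < n)
    (h₂ : n ≤ epoch d b B (2 * k + 2)) : ¬InFastPhase d b B n := by
  rintro ⟨j, hj₁, hj₂⟩
  rcases le_or_gt j k with hjk | hjk
  · exact (h₁.trans_le hj₂).not_ge ((epoch_strictMono d b B).monotone (by omega))
  · exact (hj₁.trans_le h₂).not_ge ((epoch_strictMono d b B).monotone (by omega))

variable {d b B}

theorem add_margin_le_stretch_mul (hb : 0 < b) : B + margin d b ≤ stretch d b B * b := by
  rw [stretch, ← div_le_iff₀ hb]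
  push_cast
  linarith [Nat.le_ceil ((B + margin d b) / b)]

theorem cap_le (hb : 0 < b) (hbB : b < B) (n : ℕ) : cap d b B n ≤ n * B := by
  have : (n : ℝ) * b ≤ n * B := by gcongr
  unfold cap margin
  split_ifs <;> nlinarith

theorem le_cap (hb : 0 < b) (hbB : b < B) (n : ℕ) : n * b - margin d b ≤ cap d b B n := by
  have : (n : ℝ) * b ≤ n * B := by gcongr
  unfold cap margin
  split_ifs <;> nlinarith

theorem profile_le (hb : 0 < b) (hbB : b < B) (n : ℕ) : (profile d b B n : ℝ) ≤ n * B :=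
  greedy_le_of_cap_le (Nat.zero_le n) (by simpa using mul_nonneg n.cast_nonneg (hb.trans hbB).le)
    fun j _ hjn => (cap_le hb hbB j).trans (by gcongr; linarith)

theorem le_profile (hb : 0 < b) (hbB : b < B) (hBd : B ≤ d) (n : ℕ) :
    n * b - margin d b - d ≤ profile d b B n :=
  le_greedy_of_le_cap (Nat.zero_le n) (fun j => by push_cast; linarith)
    (by simp only [greedy_zero, margin]; push_cast; nlinarith) fun j _ _ =>
      le_cap hb hbB j

theorem le_profile_epoch (hb : 0 < b) (hbB : b < B) (hBd : B ≤ d) (k : ℕ) :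
    (epoch d b B (2 * k + 1) - epoch d b B (2 * k) : ℝ) * B - d ≤
      profile d b B (epoch d b B (2 * k + 1)) := by
  refine le_greedy_of_le_cap (L := fun j => (j - epoch d b B (2 * k) : ℝ) * B)
    (epoch_strictMono d b B (show 2 * k < 2 * k + 1 by omega)).le
    (fun j => by push_cast; linarith)
    (by simpa using (neg_nonpos.2 d.cast_nonneg).trans (Nat.cast_nonneg _)) fun j hj hjn => ?_
  rw [cap, if_pos ⟨k, hj, hjn⟩]
  nlinarith [(epoch_pos d b B (2 * k)).le]

theorem profile_le_of_waiting (hb : 0 < b) (hbB : b < B) {k n : ℕ}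
    (h₁ : stretch d b B * epoch d b B (2 * k + 1) ≤ n) (h₂ : n ≤ epoch d b B (2 * k + 2)) :
    (profile d b B n : ℝ) ≤ n * b - margin d b := by
  set m := epoch d b B (2 * k + 1)
  have hm : (1 : ℝ) ≤ m := by exact_mod_cast epoch_pos d b B _
  have hn : (stretch d b B * m : ℝ) ≤ n := by exact_mod_cast h₁
  have := add_margin_le_stretch_mul (d := d) (B := B) hb
  have : 0 ≤ margin d b := by unfold margin; positivity
  refine greedy_le_of_cap_le (m := m) (le_trans (Nat.le_mul_of_pos_left _ (Nat.succ_pos _)) h₁)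
    ((profile_le hb hbB m).trans (by nlinarith)) fun j hj hjn => ?_
  rw [cap, if_neg (not_inFastPhase d b B hj (hjn.trans h₂))]
  have : (j : ℝ) ≤ n := by exact_mod_cast hjn
  nlinarith

theorem profile_succ_sub_le (n : ℕ) : profile d b B (n + 1) - profile d b B n ≤ d := by
  have := greedy_succ_le d (cap d b B) n
  unfold profile
  omega

theorem sum_profile_succ_sub (N : ℕ) :
    ∑ j ∈ Finset.range N, (profile d b B (j + 1) - profile d b B j) = profile d b B N := by
  unfold profile
  rw [Finset.sum_range_tsub (greedy_mono _ _)]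
  simp

theorem coverN_condensation_le {n : ℕ} {δ : ℝ} (hδ : ((2 : ℝ) ^ n)⁻¹ ≤ δ) :
    coverN (condensation d b B) δ ≤ 2 ^ profile d b B (n + d) := by
  have := coverN_digitSet_le d (fun n => profile d b B (n + 1) - profile d b B n) hδ
  rwa [sum_profile_succ_sub] at this

theorem one_le_coverN_condensation {δ : ℝ} (hδ : 0 < δ) : 1 ≤ coverN (condensation d b B) δ :=
  one_le_coverN (isCompact_digitSet _ _).totallyBounded (digitSet_nonempty _ _) hδ

theorem log_coverN_condensation_div_mem_Icc {n : ℕ} (hn : 1 ≤ n) {δ : ℝ}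
    (hδ : δ ∈ Ico ((2 : ℝ) ^ (n + 1))⁻¹ ((2 : ℝ) ^ n)⁻¹) :
    Real.log (coverN (condensation d b B) δ) / -Real.log δ ∈
      Icc ((profile d b B n : ℝ) / (n + 1)) (profile d b B (n + 1 + d) / n) := by
  have := log_coverN_digitSet_div_mem_Icc d (profile_succ_sub_le (b := b) (B := B)) hn hδ
  rwa [sum_profile_succ_sub, sum_profile_succ_sub] at this

theorem lbDim_condensation (hb : 0 < b) (hbB : b < B) (hBd : B ≤ d) :
    lbDim (condensation d b B) = b := by
  refine liminf_eq_of_forall_pos (fun ε hε => eventually_nhdsGT_zero_of_dyadic ?_) fun ε hε => ?_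
  · filter_upwards [eventually_ge_atTop 1, (tendsto_natCast_atTop_atTop.const_mul_atTop
      hε).eventually_ge_atTop (b + margin d b + d)] with n hn hεn δ hδ
    refine le_trans ?_ (log_coverN_condensation_div_mem_Icc hn hδ).1
    rw [le_div_iff₀ (by positivity)]
    nlinarith [le_profile hb hbB hBd n]
  · refine (tendsto_inv_two_pow_nhdsGT_zero (tendsto_epoch_sub d b B)).frequently
      (Eventually.frequently ?_)
    filter_upwards [(tendsto_epoch_sub d b B).eventually_ge_atTop 2] with k hk
    obtain ⟨n, hn⟩ : ∃ n, epoch d b B (2 * k + 2) = n + 1 + d :=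
      ⟨epoch d b B (2 * k + 2) - d - 1, by omega⟩
    have hn1 : (1 : ℝ) ≤ n := by exact_mod_cast (show 1 ≤ n by omega)
    rw [show epoch d b B (2 * k + 2) - d = n + 1 by omega]
    refine (log_coverN_condensation_div_mem_Icc (by omega) (inv_two_pow_succ_mem_Ico n)).2.trans
      ?_
    have hprof :=
      profile_le_of_waiting hb hbB ((stretch_mul_epoch_le d b B k).trans hn.le) hn.ge
    rw [div_le_iff₀ (by positivity)]
    push_cast at hprof
    unfold margin at hprof
    nlinarith

theorem ubDim_condensation (hb : 0 < b) (hbB : b < B) (hBd : B ≤ d) :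
    ubDim (condensation d b B) = B := by
  have hB : 0 < B := hb.trans hbB
  refine limsup_eq_of_forall_pos (fun ε hε => eventually_nhdsGT_zero_of_dyadic ?_) fun ε hε => ?_
  · filter_upwards [eventually_ge_atTop 1, (tendsto_natCast_atTop_atTop.const_mul_atTop
      hε).eventually_ge_atTop ((1 + d) * B)] with n hn hεn δ hδ
    refine (log_coverN_condensation_div_mem_Icc hn hδ).2.trans ?_
    have := profile_le (d := d) hb hbB (n + 1 + d)
    rw [div_le_iff₀ (by exact_mod_cast hn)]
    push_cast at this
    nlinarith
  · have hM : StrictMono fun k => epoch d b B (2 * k + 1) + 1 :=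
      fun k l h => Nat.succ_lt_succ (epoch_strictMono d b B (by omega))
    refine (tendsto_inv_two_pow_nhdsGT_zero hM.tendsto_atTop).frequently
      (Eventually.frequently ?_)
    filter_upwards [(tendsto_natCast_atTop_atTop.const_mul_atTop hε).eventually_ge_atTop
      (2 * B + d)] with k hk
    set M := epoch d b B (2 * k + 1)
    set P := epoch d b B (2 * k)
    have hP : (1 : ℝ) ≤ P := by exact_mod_cast epoch_pos d b B (2 * k)
    have hPM : ((2 * k + 2) * P : ℝ) ≤ M := by
      exact_mod_cast mul_epoch_le_epoch_succ d b B (2 * k)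
    refine le_trans ?_ (log_coverN_condensation_div_mem_Icc (epoch_pos d b B _)
      (inv_two_pow_succ_mem_Ico M)).1
    have hprof := le_profile_epoch hb hbB hBd k
    rw [le_div_iff₀ (by positivity)]
    have hεM : (2 * B + d) * P ≤ ε * M := calc
      (2 * B + d) * P ≤ ε * k * P := by gcongr
      _ ≤ ε * ((2 * k + 2) * P) := by nlinarith
      _ ≤ ε * M := by gcongr
    nlinarith

theorem eventually_stretch_mul_epoch_le {ε : ℝ} (hε : 0 < ε) :
    ∀ᶠ k in atTop,
      (stretch d b B * epoch d b B (2 * k + 1) : ℝ) ≤ ε * (epoch d b B (2 * k + 2) - d : ℕ) := by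
  filter_upwards [eventually_ge_atTop d, (tendsto_natCast_atTop_atTop.const_mul_atTop
    hε).eventually_ge_atTop 1] with k hkd hk
  have hS := stretch_mul_epoch_pos d b B (2 * k + 1)
  have hE : epoch d b B (2 * k + 2) = (2 * k + 3) * (stretch d b B * epoch d b B (2 * k + 1)) := by
    rw [epoch_succ]; ring
  rw [hE, Nat.cast_sub (hE ▸ hkd.trans (by nlinarith))]
  have hS' : (1 : ℝ) ≤ stretch d b B * epoch d b B (2 * k + 1) := by exact_mod_cast hS
  have hkd' : (d : ℝ) ≤ k := by exact_mod_cast hkd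
  push_cast
  nlinarith

theorem cre_condensation_le (hb : 0 < b) (hbB : b < B) {t ε : ℝ} (ht : b ≤ t) (hε : 0 < ε)
    {k : ℕ} (hk : (stretch d b B * epoch d b B (2 * k + 1) : ℝ) ≤
      ε * (epoch d b B (2 * k + 2) - d : ℕ)) :
    cre (condensation d b B) t ((2 : ℝ) ^ (epoch d b B (2 * k + 2) - d))⁻¹ ≤ ε := by
  set W := epoch d b B (2 * k + 2) - d
  have hS : (0 : ℝ) < stretch d b B * epoch d b B (2 * k + 1) := by
    exact_mod_cast stretch_mul_epoch_pos d b B _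
  have hW₀ : (0 : ℝ) < W := pos_of_mul_pos_right (hS.trans_le hk) hε.le
  have hW : W + d = epoch d b B (2 * k + 2) := Nat.sub_add_cancel (by
    by_contra! h
    simp [W, Nat.sub_eq_zero_of_le h.le] at hW₀)
  refine cre_le hε.le fun p hεp hp₁ => ?_
  set s := W * p
  have hεs : ε * W < s := mul_lt_mul_of_pos_right hεp hW₀ |>.trans_eq (mul_comm _ _)
  have hs₀ : 0 ≤ s := by nlinarith
  set n := ⌈s⌉₊
  have hcov : coverN (condensation d b B) (2 ^ (-s)) ≤ 2 ^ profile d b B (n + d) := by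
    refine coverN_condensation_le ?_
    rw [← Real.rpow_natCast, ← Real.rpow_neg zero_le_two]
    exact Real.rpow_le_rpow_of_exponent_le one_le_two (neg_le_neg (Nat.le_ceil s))
  have hprof : (profile d b B (n + d) : ℝ) ≤ (n + d : ℕ) * b - margin d b := by
    refine profile_le_of_waiting (k := k) hb hbB ?_ ?_
    · have : (stretch d b B * epoch d b B (2 * k + 1) : ℝ) ≤ n :=
        hk.trans (hεs.le.trans (Nat.le_ceil s))
      exact (Nat.cast_le.1 (by exact_mod_cast this)).trans (Nat.le_add_right n d)
    · rw [← hW, add_le_add_iff_right]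
      exact Nat.ceil_le.2 (mul_le_of_le_one_right W.cast_nonneg hp₁)
  have hlt : (profile d b B (n + d) : ℝ) < s * t := by
    have := Nat.ceil_lt_add_one hs₀
    unfold margin at hprof
    push_cast at hprof
    nlinarith
  rw [inv_two_pow_rpow, inv_two_pow_rpow, mul_neg, neg_neg, ← mul_assoc]
  calc (coverN (condensation d b B) (2 ^ (-s)) : ℝ) ≤ 2 ^ (profile d b B (n + d) : ℝ) := by
        rw [Real.rpow_natCast]; exact_mod_cast hcov
    _ < 2 ^ (s * t) := Real.rpow_lt_rpow_of_exponent_lt one_lt_two hlt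

theorem creT_condensation (hb : 0 < b) (hbB : b < B) {t : ℝ} (ht : b ≤ t) :
    creT (condensation d b B) t = 0 := by
  refine liminf_eq_of_forall_pos (fun ε hε => Eventually.of_forall fun δ => ?_) fun ε hε => ?_
  · linarith [cre_nonneg (one_le_coverN_condensation (d := d) (b := b) (B := B) one_pos) t δ]
  refine (tendsto_inv_two_pow_nhdsGT_zero (tendsto_epoch_sub d b B)).frequently
    (Eventually.frequently ?_)
  filter_upwards [eventually_stretch_mul_epoch_le hε] with k hk
  exact (cre_condensation_le hb hbB ht hε hk).trans_eq (zero_add ε).symm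

end Condensation

theorem exists_condensation_with_zero_creT
    (d : ℕ) (b B : ℝ) (hb : 0 < b) (hbB : b < B) (hBd : B ≤ (d : ℝ)) :
    ∃ C : Set (EuclideanSpace ℝ (Fin d)),
      C ⊆ {x : EuclideanSpace ℝ (Fin d) | ∀ i, x i ∈ Set.Icc (0 : ℝ) 1} ∧
      IsCompact C ∧ lbDim C = b ∧ ubDim C = B ∧
      ∀ t : ℝ, b ≤ t → creT C t = 0 :=
  ⟨Condensation.condensation d b B, digitSet_subset_cube _ _, isCompact_digitSet _ _,
    Condensation.lbDim_condensation hb hbB hBd, Condensation.ubDim_condensation hb hbB hBd,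
    fun _ ht => Condensation.creT_condensation hb hbB ht⟩
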